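/- Let h(x) = 1/((x_B - x)² + c_1²)^{1/2} · 1/((x_V - x)² + c_2²)^{1/2} with c_1, c_2 > 0, x_B ≠ x_V. If c_1 is small relative to |x_B - x_V| and c_2, then h(x_B) > h(x_V) if and only if c_1·r_r(x_B) < c_2·r_i(x_V), where r_r(x_B) = sqrt((x_V - x_B)² + c_2²) and r_i(x_V) = sqrt((x_B - x_V)² + c_1²). In particular when c_1 < c_2 the product path loss is minimized (received power maximized) by placing the RIS at the base-station coordinate x_B. -/
import Mathlib


/-- For `h(x) = 1/(r_i(x)·r_r(x))` with `r_i(x) = sqrt((x_B-x)² + c_1²)` and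
`r_r(x) = sqrt((x_V-x)² + c_2²)`, `c_1, c_2 > 0`, `x_B ≠ x_V` and `c_1` small
relative to `|x_B - x_V|`: `h(x_B) > h(x_V)` iff `c_1·r_r(x_B) < c_2·r_i(x_V)`;
in particular `c_1 < c_2` implies `h(x_V) < h(x_B)`. -/
theorem stmt_7 (xB xV c1 c2 : ℝ) (hc1 : 0 < c1) (hc2 : 0 < c2)
    (hne : xB ≠ xV) (hsmall : c1 < |xB - xV|)
    (ri rr h : ℝ → ℝ)
    (hri : ri = fun x => Real.sqrt ((xB - x) ^ 2 + c1 ^ 2))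
    (hrr : rr = fun x => Real.sqrt ((xV - x) ^ 2 + c2 ^ 2))
    (hh : h = fun x => 1 / (ri x * rr x)) :
    (h xB > h xV ↔ c1 * rr xB < c2 * ri xV) ∧
    (c1 < c2 → h xV < h xB) := by
  subst hri hrr hh
  simp only
  have hriB : Real.sqrt ((xB - xB) ^ 2 + c1 ^ 2) = c1 := by
    rw [sub_self]; rw [show (0:ℝ) ^ 2 + c1 ^ 2 = c1 ^ 2 by ring]
    exact Real.sqrt_sq hc1.le
  have hrrV : Real.sqrt ((xV - xV) ^ 2 + c2 ^ 2) = c2 := by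
    rw [sub_self]; rw [show (0:ℝ) ^ 2 + c2 ^ 2 = c2 ^ 2 by ring]
    exact Real.sqrt_sq hc2.le
  rw [hriB, hrrV]
  set rB := Real.sqrt ((xV - xB) ^ 2 + c2 ^ 2) with hrB
  set rV := Real.sqrt ((xB - xV) ^ 2 + c1 ^ 2) with hrV
  have hrBpos : 0 < rB := Real.sqrt_pos.mpr (by positivity)
  have hrVpos : 0 < rV := Real.sqrt_pos.mpr (by positivity)
  have hiff : 1 / (rV * c2) < 1 / (c1 * rB) ↔ c1 * rB < c2 * rV := by
    rw [div_lt_div_iff₀ (by positivity) (by positivity)]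
    constructor <;> intro H <;> nlinarith
  refine ⟨hiff, fun hlt => hiff.mpr ?_⟩
  have hd : 0 < (xB - xV) ^ 2 := by
    have : xB - xV ≠ 0 := sub_ne_zero.mpr hne
    positivity
  have hsq : (c1 * rB) ^ 2 < (c2 * rV) ^ 2 := by
    have h1 : rB ^ 2 = (xV - xB) ^ 2 + c2 ^ 2 := Real.sq_sqrt (by positivity)
    have h2 : rV ^ 2 = (xB - xV) ^ 2 + c1 ^ 2 := Real.sq_sqrt (by positivity)
    have ha : (c1 * rB) ^ 2 = c1 ^ 2 * ((xB - xV) ^ 2 + c2 ^ 2) := by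
      rw [mul_pow, h1]; ring
    have hb : (c2 * rV) ^ 2 = c2 ^ 2 * ((xB - xV) ^ 2 + c1 ^ 2) := by
      rw [mul_pow, h2]
    rw [ha, hb]
    nlinarith [mul_pos hd (mul_pos (sub_pos.mpr hlt) (add_pos hc1 hc2))]
  nlinarith [mul_pos hc1 hrBpos, mul_pos hc2 hrVpos]
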